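/- Let S be a nonempty finite type and let P, Q : S → S → ℝ be row-stochastic matrices, i.e., P s s' ≥ 0 and Q s s' ≥ 0 for all s, s', and ∑_{s'} P s s' = 1 and ∑_{s'} Q s s' = 1 for every s. If ε ≥ 0 and for every s we have ∑_{s'} |P s s' − Q s s'| ≤ ε, then for every natural number t and every initial state s₀, ∑_{s'} |(P^t) s₀ s' − (Q^t) s₀ s'| ≤ t·ε, where P^t denotes the t-fold matrix power (matrix product of P with itself t times). -/

import Mathlib

/-!
With the max-row-sum norm `‖A‖ = maxᵢ ∑ⱼ |Aᵢⱼ|`, row-stochastic matrices (and hence all their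
powers) have norm at most `1`. The identity `Pⁿ⁺¹ - Qⁿ⁺¹ = Pⁿ (P - Q) + (Pⁿ - Qⁿ) Q` and
submultiplicativity then show that each step adds at most `‖P - Q‖ ≤ ε` to `‖Pᵗ - Qᵗ‖`.
-/

open Matrix

attribute [local instance] Matrix.linftyOpSeminormedAddCommGroup Matrix.linftyOpSemiNormedRing

theorem norm_pow_sub_pow_le {R : Type*} [SeminormedRing R] {P Q : R} {ε : ℝ}
    (hP : ∀ n : ℕ, ‖P ^ n‖ ≤ 1) (hQ : ‖Q‖ ≤ 1) (hPQ : ‖P - Q‖ ≤ ε) (t : ℕ) :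
    ‖P ^ t - Q ^ t‖ ≤ t * ε := by
  have hε : 0 ≤ ε := (norm_nonneg _).trans hPQ
  induction t with
  | zero => simp
  | succ n ih =>
    have telescope : P ^ (n + 1) - Q ^ (n + 1) = P ^ n * (P - Q) + (P ^ n - Q ^ n) * Q := by
      rw [pow_succ, pow_succ]
      noncomm_ring
    calc ‖P ^ (n + 1) - Q ^ (n + 1)‖
        ≤ ‖P ^ n‖ * ‖P - Q‖ + ‖P ^ n - Q ^ n‖ * ‖Q‖ := by
          rw [telescope]
          exact norm_add_le_of_le (norm_mul_le _ _) (norm_mul_le _ _)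
      _ ≤ 1 * ε + (n * ε) * 1 := by
          gcongr
          exact hP n
      _ = (n + 1 : ℕ) * ε := by push_cast; ring

namespace Matrix

variable {m n α : Type*} [Fintype n] [SeminormedAddCommGroup α]

theorem sum_norm_row_le_linfty_opNorm [Fintype m] (A : Matrix m n α) (i : m) :
    ∑ j, ‖A i j‖ ≤ ‖A‖ := by
  simp only [← coe_nnnorm, ← NNReal.coe_sum, NNReal.coe_le_coe, linfty_opNNNorm_def]
  exact Finset.le_sup (f := fun i => ∑ j, ‖A i j‖₊) (Finset.mem_univ i)

theorem linfty_opNorm_le_of_sum_norm_row_le [Fintype m] {A : Matrix m n α} {r : ℝ} (hr : 0 ≤ r)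
    (h : ∀ i, ∑ j, ‖A i j‖ ≤ r) : ‖A‖ ≤ r := by
  lift r to NNReal using hr
  rw [linfty_opNorm_def, NNReal.coe_le_coe]
  refine Finset.sup_le fun i _ => ?_
  simpa only [← coe_nnnorm, ← NNReal.coe_sum, NNReal.coe_le_coe] using h i

theorem linfty_opNorm_le_one_of_mem_rowStochastic [DecidableEq n] {M : Matrix n n ℝ}
    (hM : M ∈ rowStochastic ℝ n) : ‖M‖ ≤ 1 :=
  linfty_opNorm_le_of_sum_norm_row_le zero_le_one fun i => by
    simp_rw [Real.norm_of_nonneg (nonneg_of_mem_rowStochastic hM)]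
    exact (sum_row_of_mem_rowStochastic hM i).le

end Matrix

theorem simulation_lemma_general {S : Type*} [Fintype S] [DecidableEq S]
    (P Q : Matrix S S ℝ)
    (hP0 : ∀ s s', 0 ≤ P s s') (hQ0 : ∀ s s', 0 ≤ Q s s')
    (hP1 : ∀ s, ∑ s', P s s' = 1) (hQ1 : ∀ s, ∑ s', Q s s' = 1)
    (ε : ℝ) (hε : 0 ≤ ε)
    (h : ∀ s, ∑ s', |P s s' - Q s s'| ≤ ε) :
    ∀ (t : ℕ) (s₀ : S), ∑ s', |(P ^ t) s₀ s' - (Q ^ t) s₀ s'| ≤ t * ε := by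
  intro t s₀
  have hP : P ∈ rowStochastic ℝ S := mem_rowStochastic_iff_sum.2 ⟨hP0, hP1⟩
  have hQ : Q ∈ rowStochastic ℝ S := mem_rowStochastic_iff_sum.2 ⟨hQ0, hQ1⟩
  have hPQ : ‖P - Q‖ ≤ ε := linfty_opNorm_le_of_sum_norm_row_le hε h
  calc ∑ s', |(P ^ t) s₀ s' - (Q ^ t) s₀ s'|
      = ∑ s', ‖(P ^ t - Q ^ t) s₀ s'‖ := rfl
    _ ≤ ‖P ^ t - Q ^ t‖ := sum_norm_row_le_linfty_opNorm _ s₀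
    _ ≤ t * ε := norm_pow_sub_pow_le
        (fun k => linfty_opNorm_le_one_of_mem_rowStochastic (pow_mem hP k))
        (linfty_opNorm_le_one_of_mem_rowStochastic hQ) hPQ t

theorem simulation_lemma {S : Type*} [Fintype S] [Nonempty S] [DecidableEq S]
    (P Q : Matrix S S ℝ)
    (hP0 : ∀ s s', 0 ≤ P s s') (hQ0 : ∀ s s', 0 ≤ Q s s')
    (hP1 : ∀ s, ∑ s', P s s' = 1) (hQ1 : ∀ s, ∑ s', Q s s' = 1)
    (ε : ℝ) (hε : 0 ≤ ε)
    (h : ∀ s, ∑ s', |P s s' - Q s s'| ≤ ε) :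
    ∀ (t : ℕ) (s₀ : S), ∑ s', |(P ^ t) s₀ s' - (Q ^ t) s₀ s'| ≤ t * ε :=
  simulation_lemma_general P Q hP0 hQ0 hP1 hQ1 ε hε h
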